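/- arXiv:1205.6275 — 2 statements merged into one kernel-verified Lean document; each statement's English description precedes it below -/
import Mathlib

section
/- If Y = UZ where U is uniform on (0,1) and Z has distribution function G on (0,∞), with U and Z independent, then Y has an absolutely continuous distribution with density f(y) = ∫_{[y,∞)} z^{-1} dG(z) for y > 0. -/
open MeasureTheory ProbabilityTheory Set
open scoped ENNReal

/-!
Conditionally on `Z = z > 0`, the product `U * z` is uniform on `(0, z)`, with density
`z⁻¹ 𝟙_{(0,z)}`. Mixing over `z ~ G` and exchanging the integrals (Tonelli) gives the density
`y ↦ ∫_{(y,∞)} z⁻¹ dG(z)` on `(0,∞)`. Replacing `(y,∞)` by `[y,∞)` changes it only at the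
countably many atoms of `G`, a Lebesgue-null set.
-/

noncomputable def uniformIooDensity (z : ℝ) : ℝ → ℝ≥0∞ :=
  (Ioo 0 z).indicator fun _ => ENNReal.ofReal z⁻¹

theorem measurable_uniformIooDensity : Measurable (Function.uncurry uniformIooDensity) := by
  have hset : MeasurableSet {p : ℝ × ℝ | 0 < p.2 ∧ p.2 < p.1} :=
    (measurableSet_lt measurable_const measurable_snd).inter
      (measurableSet_lt measurable_snd measurable_fst)
  exact measurable_fst.inv.ennreal_ofReal.indicator hset

theorem map_mul_const_volume_Ioo_zero_one {z : ℝ} (hz : 0 < z) :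
    (volume.restrict (Ioo (0:ℝ) 1)).map (· * z) = volume.withDensity (uniformIooDensity z) := by
  ext s hs
  have hpre : (· * z) ⁻¹' (s ∩ Ioo 0 z) = (· * z) ⁻¹' s ∩ Ioo 0 1 := by
    rw [preimage_inter, preimage_mul_const_Ioo₀ _ _ hz, zero_div, div_self hz.ne']
  rw [Measure.map_apply (measurable_mul_const z) hs,
    Measure.restrict_apply (measurable_mul_const z hs), ← hpre,
    Real.volume_preimage_mul_right hz.ne', abs_of_pos (inv_pos.mpr hz),
    withDensity_apply _ hs, uniformIooDensity, lintegral_indicator_const measurableSet_Ioo,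
    Measure.restrict_apply measurableSet_Ioo, inter_comm]

theorem lintegral_withDensity_apply {α β : Type*} [MeasurableSpace α] [MeasurableSpace β]
    {μ : Measure α} {ν : Measure β} [SFinite μ] [SFinite ν] {k : β → α → ℝ≥0∞}
    (hk : Measurable (Function.uncurry k)) {s : Set α} (hs : MeasurableSet s) :
    ∫⁻ z, μ.withDensity (k z) s ∂ν = μ.withDensity (fun y => ∫⁻ z, k z y ∂ν) s := by
  simp_rw [withDensity_apply _ hs]
  exact lintegral_lintegral_swap hk.aemeasurable

theorem lintegral_uniformIooDensity (G : Measure ℝ) (y : ℝ) :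
    ∫⁻ z, uniformIooDensity z y ∂G
      = (Ioi 0).indicator (fun y => ∫⁻ z in Ioi y, ENNReal.ofReal z⁻¹ ∂G) y := by
  by_cases hy : 0 < y
  · have hk : (uniformIooDensity · y) = (Ioi y).indicator fun z => ENNReal.ofReal z⁻¹ := by
      ext z
      simp [uniformIooDensity, indicator, hy]
    rw [indicator_of_mem (mem_Ioi.mpr hy), hk, lintegral_indicator measurableSet_Ioi]
  · simp [uniformIooDensity, indicator, hy]

theorem map_mul_prod_volume_Ioo_zero_one {G : Measure ℝ} [SFinite G] (hG : ∀ᵐ z ∂G, 0 < z) :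
    ((volume.restrict (Ioo (0:ℝ) 1)).prod G).map (fun p => p.1 * p.2)
      = (volume.restrict (Ioi 0)).withDensity
          fun y => ∫⁻ z in Ioi y, ENNReal.ofReal z⁻¹ ∂G := by
  ext s hs
  have hmul : Measurable fun p : ℝ × ℝ => p.1 * p.2 := measurable_fst.mul measurable_snd
  calc ((volume.restrict (Ioo (0:ℝ) 1)).prod G).map (fun p => p.1 * p.2) s
      = ∫⁻ z, (volume.restrict (Ioo (0:ℝ) 1)).map (· * z) s ∂G := by
        rw [Measure.map_apply hmul hs, Measure.prod_apply_symm (hmul hs)]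
        refine lintegral_congr fun z => ?_
        rw [Measure.map_apply (measurable_mul_const z) hs]
        rfl
    _ = ∫⁻ z, volume.withDensity (uniformIooDensity z) s ∂G :=
        lintegral_congr_ae <| hG.mono fun z hz => by
          simp only [map_mul_const_volume_Ioo_zero_one hz]
    _ = _ := by
        rw [lintegral_withDensity_apply measurable_uniformIooDensity hs]
        simp_rw [lintegral_uniformIooDensity, withDensity_indicator measurableSet_Ioi]

theorem ae_measure_singleton_eq_zero {α : Type*} [MeasurableSpace α] [MeasurableSingletonClass α]
    (μ ν : Measure α) [NullSingletonClass μ] [SFinite ν] : ∀ᵐ y ∂μ, ν {y} = 0 := by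
  have hatoms : {y | 0 < ν {y}}.Countable :=
    Measure.countable_meas_pos_of_disjoint_iUnion (fun y => measurableSet_singleton y)
      fun _ _ h => disjoint_singleton.mpr h
  exact measure_mono_null (fun y hy => pos_iff_ne_zero.mpr hy) (hatoms.measure_zero μ)

theorem ofReal_setIntegral_Ici_inv (G : Measure ℝ) [IsFiniteMeasure G] {y : ℝ} (hy : 0 < y) :
    ENNReal.ofReal (∫ z in Ici y, z⁻¹ ∂G) = ∫⁻ z in Ici y, ENNReal.ofReal z⁻¹ ∂G := by
  have hpos : ∀ᵐ z ∂G.restrict (Ici y), 0 < z := by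
    filter_upwards [ae_restrict_mem measurableSet_Ici] with z hz using hy.trans_le hz
  refine ofReal_integral_eq_lintegral_ofReal ?_ (hpos.mono fun z hz => (inv_pos.mpr hz).le)
  refine Measure.integrableOn_of_bounded (M := y⁻¹) (measure_ne_top G _)
    measurable_inv.aestronglyMeasurable ?_
  filter_upwards [ae_restrict_mem measurableSet_Ici, hpos] with z hyz hz
  rw [Real.norm_eq_abs, abs_of_pos (inv_pos.mpr hz)]
  exact inv_anti₀ hy hyz

/-- If `Y = U * Z` with `U` uniform on `(0,1)`, `Z ~ G` supported on `(0,∞)`, and `U, Z`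
independent, then `Y` has density `f(y) = ∫_{[y,∞)} z⁻¹ dG(z)` on `(0,∞)`. -/
theorem mult_censoring_density
    {Ω : Type*} [MeasurableSpace Ω] (P : Measure Ω) [IsProbabilityMeasure P]
    (U Z : Ω → ℝ) (hU : Measurable U) (hZ : Measurable Z)
    (hUunif : Measure.map U P = volume.restrict (Set.Ioo (0:ℝ) 1))
    (hZpos : Measure.map Z P (Set.Iic 0) = 0)
    (hindep : IndepFun U Z P) :
    Measure.map (fun ω => U ω * Z ω) P
      = (volume.restrict (Set.Ioi (0:ℝ))).withDensity
          (fun y => ENNReal.ofReal (∫ z in Set.Ici y, z⁻¹ ∂(Measure.map Z P))) := by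
  have : IsProbabilityMeasure (P.map Z) := Measure.isProbabilityMeasure_map hZ.aemeasurable
  have hGpos : ∀ᵐ z ∂P.map Z, 0 < z := by
    rw [ae_iff]
    simp only [not_lt]
    exact hZpos
  have hjoint : P.map (fun ω => (U ω, Z ω)) = (volume.restrict (Ioo (0:ℝ) 1)).prod (P.map Z) :=
    hUunif ▸ (indepFun_iff_map_prod_eq_prod_map_map hU.aemeasurable hZ.aemeasurable).mp hindep
  calc P.map (fun ω => U ω * Z ω)
      = (P.map fun ω => (U ω, Z ω)).map (fun p => p.1 * p.2) :=
        (Measure.map_map (measurable_fst.mul measurable_snd) (hU.prodMk hZ)).symm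
    _ = (volume.restrict (Ioi 0)).withDensity
          fun y => ∫⁻ z in Ioi y, ENNReal.ofReal z⁻¹ ∂P.map Z := by
        rw [hjoint, map_mul_prod_volume_Ioo_zero_one hGpos]
    _ = _ := by
        refine withDensity_congr_ae ?_
        filter_upwards [ae_restrict_of_ae (ae_measure_singleton_eq_zero volume (P.map Z)),
          ae_restrict_mem measurableSet_Ioi] with y hatom hy
        rw [ofReal_setIntegral_Ici_inv _ hy]
        exact setLIntegral_congr (Ioi_ae_eq_Ici' hatom)
end

section
/- Let t₁ < ⋯ < t_k be positive reals, δ_i ∈ {0,1} with δ_i = 1 exactly for m indices, and suppose δ₁ = ⋯ = δ_{r₀−1} = 0 for some index r₀. Define D = {(a_{r₀},…,a_k) : a_i ≥ 0, Σ a_i = 1, a_k ≥ 1/k} and the map φ = (φ_{r₀},…,φ_k) with φ_i(a) = (1/k)[δ_i + (a_i/t_i) Σ_{j=1}^{i} (1−δ_j)/(Σ_{q=max(j,r₀)}^{k} a_q/t_q)]. Then φ is a continuous map from D into D, and hence has a fixed point in D. -/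
open Finset

/-- The simplex-like domain `D` of the fixed-point argument. -/
def Dset (k r₀ : ℕ) : Set (ℕ → ℝ) :=
  {a | (∀ i ∈ Finset.Icc r₀ k, 0 ≤ a i) ∧
    (∑ i ∈ Finset.Icc r₀ k, a i) = 1 ∧ (1 : ℝ) / k ≤ a k}

/-- The fixed-point map `φ` of the score-equation existence proof. -/
noncomputable def phiMap (k r₀ : ℕ) (t δ : ℕ → ℝ) : (ℕ → ℝ) → (ℕ → ℝ) :=
  fun a i => (1 / (k : ℝ)) * (δ i + (a i / t i) *
    ∑ j ∈ Finset.Icc 1 i,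
      (1 - δ j) / (∑ q ∈ Finset.Icc (max j r₀) k, a q / t q))

open Filter Topology

/-!
Instead of Brouwer's theorem, a variational argument. The fixed points of `φ` are the
stationary points, on the simplex over `r₀, …, k`, of the likelihood
`∏ a_p ^ δ_p * ∏ S_j(a) ^ (1 - δ_j)` with `S_j(a) = ∑_{q ≥ max j r₀} a_q / t_q`, whose
logarithmic partial derivatives are the scores `D_i = δ_i / a_i + C_i / t_i`, where
`C_i = ∑_{j ≤ i} (1 - δ_j) / S_j(a)`. A maximiser of the
likelihood over the (compact) simplex exists and has positive likelihood, so the scores are all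
equal on its support (first-order conditions along `e_l - e_i`). Exchanging the order of summation
in `∑_i (a_i / t_i) C_i` gives `∑_i a_i D_i = ∑_i δ_i + ∑_j (1 - δ_j) = k`, so every score on the
support equals `k`, which is the fixed-point equation. The same identity gives `∑ φ_i = 1`, and the
`j = k` term of `C_k` alone gives `φ_k ≥ 1 / k`.
-/

-- At `x = 0` both sides vanish because `Real.log 0 = 0`.
lemma Real.log_rpow_of_nonneg {x : ℝ} (hx : 0 ≤ x) (y : ℝ) : Real.log (x ^ y) = y * Real.log x := by
  rcases hx.eq_or_lt with rfl | hx
  · by_cases hy : y = 0 <;> simp [hy]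
  · exact Real.log_rpow hx y

section Simplex

variable {ι : Type*} (s : Finset ι)

def simplexOn : Set (ι → ℝ) :=
  {a | (∀ q ∉ s, a q = 0) ∧ (∀ q ∈ s, 0 ≤ a q) ∧ ∑ q ∈ s, a q = 1}

variable {s}

lemma exists_pos_mem_simplexOn [DecidableEq ι] (hs : s.Nonempty) :
    ∃ a ∈ simplexOn s, ∀ q ∈ s, 0 < a q := by
  have hcard : (0 : ℝ) < #s := by exact_mod_cast hs.card_pos
  refine ⟨fun q => if q ∈ s then (#s : ℝ)⁻¹ else 0, ⟨fun q hq => if_neg hq, fun q hq => ?_, ?_⟩,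
    fun q hq => ?_⟩
  · simp [hq]
  · rw [sum_congr rfl fun q hq => if_pos hq, sum_const, nsmul_eq_mul, mul_inv_cancel₀ hcard.ne']
  · simpa [hq] using hcard

lemma simplexOn_subset_pi : simplexOn s ⊆ Set.univ.pi fun _ => Set.Icc (0 : ℝ) 1 := by
  rintro a ⟨hout, hnn, hsum⟩ q -
  by_cases hq : q ∈ s
  · exact ⟨hnn q hq, hsum ▸ single_le_sum hnn hq⟩
  · simp [hout q hq]

lemma isCompact_simplexOn : IsCompact (simplexOn s) := by
  refine (isCompact_univ_pi fun _ => isCompact_Icc).of_isClosed_subset ?_ simplexOn_subset_pi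
  simp only [simplexOn, Set.ofPred_and, Set.ofPred_forall]
  refine (isClosed_iInter fun q => isClosed_iInter fun _ => ?_).inter
    ((isClosed_iInter fun q => isClosed_iInter fun _ => ?_).inter ?_)
  · exact isClosed_eq (continuous_apply q) continuous_const
  · exact isClosed_le continuous_const (continuous_apply q)
  · exact isClosed_eq (continuous_finsetSum _ fun q _ => continuous_apply q) continuous_const

lemma eq_sum_mul_of_forall_le {A D : ι → ℝ} (hA : A ∈ simplexOn s)
    (hD : ∀ i ∈ s, ∀ l ∈ s, 0 < A i → D l ≤ D i) {i : ι} (hi : i ∈ s) (hAi : 0 < A i) :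
    D i = ∑ q ∈ s, A q * D q := by
  have hterm : ∀ q ∈ s, A q * D q = A q * D i := fun q hq => by
    rcases (hA.2.1 q hq).eq_or_lt with h | h
    · simp [← h]
    · rw [le_antisymm (hD q hq i hi h) (hD i hi q hq hAi)]
  rw [sum_congr rfl hterm, ← sum_mul, hA.2.2, one_mul]

variable [DecidableEq ι]

lemma add_smul_single_sub_single_mem_simplexOn {a : ι → ℝ} (ha : a ∈ simplexOn s) {i l : ι}
    (hi : i ∈ s) (hl : l ∈ s) {x : ℝ} (hx₀ : 0 ≤ x) (hxi : x ≤ a i) :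
    a + x • (Pi.single l 1 - Pi.single i 1) ∈ simplexOn s := by
  obtain ⟨hout, hnn, hsum⟩ := ha
  refine ⟨fun q hq => ?_, fun q hq => ?_, ?_⟩
  · have : q ≠ l ∧ q ≠ i := ⟨by rintro rfl; exact hq hl, by rintro rfl; exact hq hi⟩
    simp [hout q hq, this]
  · have hq₀ := hnn q hq
    simp only [Pi.add_apply, Pi.smul_apply, Pi.sub_apply, Pi.single_apply, smul_eq_mul]
    split_ifs with h₁ h₂ <;> subst_vars <;> nlinarith
  · simp [sum_add_distrib, ← mul_sum, sum_sub_distrib, hi, hl, hsum]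

lemma le_of_isMaxOn_simplexOn {L F : (ι → ℝ) → ℝ} {D A : ι → ℝ} (hL : Continuous L)
    (hA : A ∈ simplexOn s) (hmax : IsMaxOn L (simplexOn s) A) (hLA : 0 < L A)
    (hF : ∀ a ∈ simplexOn s, 0 < L a → F a = Real.log (L a))
    (hD : ∀ v, HasDerivAt (fun x : ℝ => F (A + x • v)) (∑ q ∈ s, v q * D q) 0)
    {i l : ι} (hi : i ∈ s) (hl : l ∈ s) (hAi : 0 < A i) : D l ≤ D i := by
  set v : ι → ℝ := Pi.single l 1 - Pi.single i 1
  have hslope : ∑ q ∈ s, v q * D q = D l - D i := by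
    simp [v, sub_mul, sum_sub_distrib, Pi.single_apply, hi, hl]
  have hmem : ∀ᶠ x in 𝓝[>] (0 : ℝ), A + x • v ∈ simplexOn s := by
    filter_upwards [Ioc_mem_nhdsGT hAi] with x hx
    exact add_smul_single_sub_single_mem_simplexOn hA hi hl hx.1.le hx.2
  have hpos : ∀ᶠ x in 𝓝[>] (0 : ℝ), 0 < L (A + x • v) := by
    refine nhdsWithin_le_nhds (Tendsto.eventually_const_lt (by simpa using hLA) ?_)
    exact (hL.comp (by fun_prop)).tendsto' 0 _ (by simp)
  have hle : ∀ᶠ x in 𝓝[>] (0 : ℝ), x⁻¹ • (F (A + (0 + x) • v) - F (A + (0 : ℝ) • v)) ≤ 0 := by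
    filter_upwards [hmem, hpos, self_mem_nhdsWithin] with x hxm hxp hx
    rw [zero_add, zero_smul, add_zero, hF _ hxm hxp, hF A hA hLA, smul_eq_mul]
    exact mul_nonpos_of_nonneg_of_nonpos (inv_nonneg.2 (le_of_lt hx))
      (sub_nonpos.2 (Real.log_le_log hxp (hmax hxm)))
  linarith [le_of_tendsto (hD v).tendsto_slope_zero_right hle]

end Simplex

namespace MultiplicativeCensoring

variable (k r₀ : ℕ) (t δ : ℕ → ℝ)

noncomputable def tailSum (a : ℕ → ℝ) (j : ℕ) : ℝ := ∑ q ∈ Icc (max j r₀) k, a q / t q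

noncomputable def censoredSum (a : ℕ → ℝ) (i : ℕ) : ℝ :=
  ∑ j ∈ Icc 1 i, (1 - δ j) / tailSum k r₀ t a j

noncomputable def score (a : ℕ → ℝ) (i : ℕ) : ℝ := δ i / a i + censoredSum k r₀ t δ a i / t i

noncomputable def likelihood (a : ℕ → ℝ) : ℝ :=
  (∏ p ∈ Icc r₀ k, a p ^ δ p) * ∏ j ∈ Icc 1 k, tailSum k r₀ t a j ^ (1 - δ j)

noncomputable def logLikelihood (a : ℕ → ℝ) : ℝ :=
  ∑ p ∈ Icc r₀ k, δ p * Real.log (a p) + ∑ j ∈ Icc 1 k, (1 - δ j) * Real.log (tailSum k r₀ t a j)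

lemma phiMap_apply (a : ℕ → ℝ) (i : ℕ) :
    phiMap k r₀ t δ a i = 1 / k * (δ i + a i / t i * censoredSum k r₀ t δ a i) := rfl

lemma sum_Icc_sum_Icc_comm {M : Type*} [AddCommMonoid M] (f : ℕ → ℕ → M) :
    ∑ i ∈ Icc r₀ k, ∑ j ∈ Icc 1 i, f i j = ∑ j ∈ Icc 1 k, ∑ i ∈ Icc (max j r₀) k, f i j :=
  sum_comm' fun i j => by simp only [mem_Icc]; omega

lemma tailSum_add_smul (a v : ℕ → ℝ) (x : ℝ) (j : ℕ) :
    tailSum k r₀ t (a + x • v) j = tailSum k r₀ t a j + x * tailSum k r₀ t v j := by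
  simp only [tailSum, Pi.add_apply, Pi.smul_apply, smul_eq_mul, mul_sum, ← sum_add_distrib]
  exact sum_congr rfl fun q _ => by ring

lemma sum_div_mul_censoredSum (a v : ℕ → ℝ) :
    ∑ i ∈ Icc r₀ k, v i / t i * censoredSum k r₀ t δ a i
      = ∑ j ∈ Icc 1 k, (1 - δ j) * (tailSum k r₀ t v j / tailSum k r₀ t a j) := by
  simp only [censoredSum, tailSum, mul_sum]
  rw [sum_Icc_sum_Icc_comm]
  refine sum_congr rfl fun j _ => ?_
  rw [← sum_mul]
  ring

lemma mul_score {a : ℕ → ℝ} {i : ℕ} (h : a i ≠ 0 ∨ δ i = 0) :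
    a i * score k r₀ t δ a i = δ i + a i / t i * censoredSum k r₀ t δ a i := by
  rcases h with h | h
  · rw [score, mul_add, mul_div_cancel₀ _ h, mul_div_assoc']
    ring
  · simp only [score, h, zero_div, zero_add]
    ring

lemma sum_delta_add_sum_one_sub_delta (hr₀ : 1 ≤ r₀)
    (hδr : ∀ i, 1 ≤ i → i < r₀ → δ i = 0) :
    ∑ i ∈ Icc r₀ k, δ i + ∑ j ∈ Icc 1 k, (1 - δ j) = k := by
  have hδ : ∑ i ∈ Icc r₀ k, δ i = ∑ i ∈ Icc 1 k, δ i :=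
    sum_subset (Icc_subset_Icc_left hr₀) fun i hi hi' => by
      simp only [mem_Icc] at hi hi'
      exact hδr i hi.1 (by omega)
  rw [hδ, sum_sub_distrib, sum_const, Nat.card_Icc, add_tsub_cancel_right, nsmul_eq_mul,
    mul_one, add_sub_cancel]

lemma sum_phiMap_numerator (hr₀ : 1 ≤ r₀) (hδr : ∀ i, 1 ≤ i → i < r₀ → δ i = 0)
    {a : ℕ → ℝ} (hS : ∀ j ∈ Icc 1 k, tailSum k r₀ t a j ≠ 0) :
    ∑ i ∈ Icc r₀ k, (δ i + a i / t i * censoredSum k r₀ t δ a i) = k := by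
  rw [sum_add_distrib, sum_div_mul_censoredSum, ← sum_delta_add_sum_one_sub_delta k r₀ δ hr₀ hδr]
  congr 1
  exact sum_congr rfl fun j hj => by rw [div_self (hS j hj), mul_one]

variable {k r₀ t δ}

lemma tailSum_nonneg (ht : ∀ q ∈ Icc r₀ k, 0 < t q) {a : ℕ → ℝ} (ha : ∀ q ∈ Icc r₀ k, 0 ≤ a q)
    (j : ℕ) : 0 ≤ tailSum k r₀ t a j :=
  sum_nonneg fun q hq =>
    have hq' := Icc_subset_Icc_left (le_max_right j r₀) hq
    div_nonneg (ha q hq') (ht q hq').le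

lemma tailSum_pos (hrk : r₀ ≤ k) (ht : ∀ q ∈ Icc r₀ k, 0 < t q) {a : ℕ → ℝ}
    (ha : ∀ q ∈ Icc r₀ k, 0 ≤ a q) (hak : 0 < a k) {j : ℕ} (hj : j ≤ k) :
    0 < tailSum k r₀ t a j := by
  have hI : Icc (max j r₀) k ⊆ Icc r₀ k := Icc_subset_Icc_left (le_max_right j r₀)
  have hk : k ∈ Icc (max j r₀) k := mem_Icc.2 ⟨max_le hj hrk, le_rfl⟩
  exact sum_pos' (fun q hq => div_nonneg (ha q (hI hq)) (ht q (hI hq)).le)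
    ⟨k, hk, div_pos hak (ht k (hI hk))⟩

lemma censoredSum_nonneg (ht : ∀ q ∈ Icc r₀ k, 0 < t q) (hδ₁ : ∀ i, δ i ≤ 1) {a : ℕ → ℝ}
    (ha : ∀ q ∈ Icc r₀ k, 0 ≤ a q) (i : ℕ) : 0 ≤ censoredSum k r₀ t δ a i :=
  sum_nonneg fun j _ => div_nonneg (sub_nonneg.2 (hδ₁ j)) (tailSum_nonneg ht ha j)

lemma one_le_phiMap_numerator_self (hr₀ : 1 ≤ r₀) (hrk : r₀ ≤ k) (ht : ∀ q ∈ Icc r₀ k, 0 < t q)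
    (hδ₁ : ∀ i, δ i ≤ 1) {a : ℕ → ℝ} (ha : ∀ q ∈ Icc r₀ k, 0 ≤ a q) (hak : 0 < a k) :
    1 ≤ δ k + a k / t k * censoredSum k r₀ t δ a k := by
  have hq : 0 < a k / t k := div_pos hak (ht k (right_mem_Icc.2 hrk))
  have hlast : (1 - δ k) / (a k / t k) ≤ censoredSum k r₀ t δ a k := by
    have hS : tailSum k r₀ t a k = a k / t k := by simp [tailSum, max_eq_left hrk]
    rw [← hS]
    exact single_le_sum (f := fun j => (1 - δ j) / tailSum k r₀ t a j)
      (fun j _ => div_nonneg (sub_nonneg.2 (hδ₁ j)) (tailSum_nonneg ht ha j))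
      (right_mem_Icc.2 (hr₀.trans hrk))
  have := mul_le_mul_of_nonneg_left hlast hq.le
  rw [mul_div_cancel₀ _ hq.ne'] at this
  linarith

lemma phiMap_mem_Dset (hr₀ : 1 ≤ r₀) (hrk : r₀ ≤ k) (ht : ∀ q ∈ Icc r₀ k, 0 < t q)
    (hδ₀ : ∀ i, 0 ≤ δ i) (hδ₁ : ∀ i, δ i ≤ 1) (hδr : ∀ i, 1 ≤ i → i < r₀ → δ i = 0)
    {a : ℕ → ℝ} (ha : ∀ q ∈ Icc r₀ k, 0 ≤ a q) (hak : 0 < a k) :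
    phiMap k r₀ t δ a ∈ Dset k r₀ := by
  have hk : (0 : ℝ) < k := by exact_mod_cast hr₀.trans hrk
  refine ⟨fun i hi => ?_, ?_, ?_⟩
  · exact mul_nonneg (by positivity) (add_nonneg (hδ₀ i)
      (mul_nonneg (div_nonneg (ha i hi) (ht i hi).le) (censoredSum_nonneg ht hδ₁ ha i)))
  · simp only [phiMap_apply, ← mul_sum]
    rw [sum_phiMap_numerator k r₀ t δ hr₀ hδr
      fun j hj => (tailSum_pos hrk ht ha hak (mem_Icc.1 hj).2).ne', one_div, inv_mul_cancel₀ hk.ne']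
  · rw [phiMap_apply]
    exact le_mul_of_one_le_right (by positivity)
      (one_le_phiMap_numerator_self hr₀ hrk ht hδ₁ ha hak)

lemma pos_of_mem_Dset (hk : 1 ≤ k) {a : ℕ → ℝ} (ha : a ∈ Dset k r₀) : 0 < a k :=
  (one_div_pos.2 (by exact_mod_cast hk)).trans_le ha.2.2

lemma mapsTo_phiMap (hr₀ : 1 ≤ r₀) (hrk : r₀ ≤ k) (ht : ∀ q ∈ Icc r₀ k, 0 < t q)
    (hδ₀ : ∀ i, 0 ≤ δ i) (hδ₁ : ∀ i, δ i ≤ 1) (hδr : ∀ i, 1 ≤ i → i < r₀ → δ i = 0) :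
    Set.MapsTo (phiMap k r₀ t δ) (Dset k r₀) (Dset k r₀) := fun _ ha =>
  phiMap_mem_Dset hr₀ hrk ht hδ₀ hδ₁ hδr ha.1 (pos_of_mem_Dset (hr₀.trans hrk) ha)

lemma continuousOn_phiMap (hr₀ : 1 ≤ r₀) (hrk : r₀ ≤ k) (ht : ∀ q ∈ Icc r₀ k, 0 < t q) :
    ContinuousOn (phiMap k r₀ t δ) (Dset k r₀) := by
  refine continuousOn_pi.2 fun i => continuousOn_const.mul (continuousOn_const.add
    (((continuous_apply i).div_const _).continuousOn.mul (continuousOn_finsetSum _ fun j _ => ?_)))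
  rcases le_or_gt j k with hjk | hjk
  · refine continuousOn_const.div
      (continuous_finsetSum _ fun q _ => (continuous_apply q).div_const _).continuousOn ?_
    exact fun _ ha => (tailSum_pos hrk ht ha.1 (pos_of_mem_Dset (hr₀.trans hrk) ha) hjk).ne'
  · simp only [Icc_eq_empty_of_lt (lt_of_lt_of_le hjk (le_max_left j r₀)), sum_empty, div_zero]
    exact continuousOn_const

lemma continuous_likelihood (hδ₀ : ∀ i, 0 ≤ δ i) (hδ₁ : ∀ i, δ i ≤ 1) :
    Continuous (likelihood k r₀ t δ) := by
  have htail (j : ℕ) : Continuous fun a => tailSum k r₀ t a j :=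
    continuous_finsetSum _ fun q _ => (continuous_apply q).div_const _
  exact (continuous_finsetProd _ fun p _ =>
      (Real.continuous_rpow_const (hδ₀ p)).comp (continuous_apply p)).mul
    (continuous_finsetProd _ fun j _ =>
      (Real.continuous_rpow_const (sub_nonneg.2 (hδ₁ j))).comp (htail j))

lemma likelihood_pos (hrk : r₀ ≤ k) (ht : ∀ q ∈ Icc r₀ k, 0 < t q) {a : ℕ → ℝ}
    (ha : ∀ q ∈ Icc r₀ k, 0 < a q) : 0 < likelihood k r₀ t δ a :=
  mul_pos (prod_pos fun p hp => Real.rpow_pos_of_pos (ha p hp) _)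
    (prod_pos fun _ hj => Real.rpow_pos_of_pos (tailSum_pos hrk ht (fun q hq => (ha q hq).le)
      (ha k (right_mem_Icc.2 hrk)) (mem_Icc.1 hj).2) _)

lemma pos_of_likelihood_ne_zero (hr₀ : 1 ≤ r₀) (hrk : r₀ ≤ k) {a : ℕ → ℝ}
    (ha : ∀ q ∈ Icc r₀ k, 0 ≤ a q) (hL : likelihood k r₀ t δ a ≠ 0) :
    (∀ p ∈ Icc r₀ k, δ p ≠ 0 → 0 < a p) ∧ 0 < a k := by
  have hfirst := prod_ne_zero_iff.1 (left_ne_zero_of_mul hL)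
  have hsecond := prod_ne_zero_iff.1 (right_ne_zero_of_mul hL)
  have hpos : ∀ p ∈ Icc r₀ k, δ p ≠ 0 → 0 < a p := fun p hp hδ =>
    (ha p hp).lt_of_ne' fun h => hfirst p hp (by rw [h, Real.zero_rpow hδ])
  refine ⟨hpos, ?_⟩
  by_cases hδk : δ k = 0
  · have := hsecond k (right_mem_Icc.2 (hr₀.trans hrk))
    rw [hδk, sub_zero, Real.rpow_one, tailSum, max_eq_left hrk, Icc_self, sum_singleton] at this
    exact (ha k (right_mem_Icc.2 hrk)).lt_of_ne' (left_ne_zero_of_mul this)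
  · exact hpos k (right_mem_Icc.2 hrk) hδk

lemma log_likelihood (ht : ∀ q ∈ Icc r₀ k, 0 < t q) {a : ℕ → ℝ} (ha : ∀ q ∈ Icc r₀ k, 0 ≤ a q)
    (hL : likelihood k r₀ t δ a ≠ 0) :
    Real.log (likelihood k r₀ t δ a) = logLikelihood k r₀ t δ a := by
  rw [likelihood, Real.log_mul (left_ne_zero_of_mul hL) (right_ne_zero_of_mul hL),
    Real.log_prod (prod_ne_zero_iff.1 (left_ne_zero_of_mul hL)),
    Real.log_prod (prod_ne_zero_iff.1 (right_ne_zero_of_mul hL)), logLikelihood]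
  congr 1
  · exact sum_congr rfl fun p hp => Real.log_rpow_of_nonneg (ha p hp) _
  · exact sum_congr rfl fun j _ => Real.log_rpow_of_nonneg (tailSum_nonneg ht ha j) _

lemma hasDerivAt_logLikelihood_line {a : ℕ → ℝ} (ha : ∀ p ∈ Icc r₀ k, δ p ≠ 0 → a p ≠ 0)
    (hS : ∀ j ∈ Icc 1 k, tailSum k r₀ t a j ≠ 0) (v : ℕ → ℝ) :
    HasDerivAt (fun x : ℝ => logLikelihood k r₀ t δ (a + x • v))
      (∑ q ∈ Icc r₀ k, v q * score k r₀ t δ a q) 0 := by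
  have hderiv : ∑ q ∈ Icc r₀ k, v q * score k r₀ t δ a q
      = ∑ p ∈ Icc r₀ k, δ p * (v p / a p)
        + ∑ j ∈ Icc 1 k, (1 - δ j) * (tailSum k r₀ t v j / tailSum k r₀ t a j) := by
    rw [← sum_div_mul_censoredSum, ← sum_add_distrib]
    exact sum_congr rfl fun q _ => by rw [score]; ring
  simp only [hderiv, logLikelihood, tailSum_add_smul, Pi.add_apply, Pi.smul_apply, smul_eq_mul]
  refine (HasDerivAt.fun_sum fun p hp => ?_).add (HasDerivAt.fun_sum fun j hj => ?_)
  · by_cases hδ : δ p = 0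
    · simpa [hδ] using hasDerivAt_const (0 : ℝ) (0 : ℝ)
    · have hline := ((hasDerivAt_mul_const (x := (0 : ℝ)) (v p)).const_add (a p)).log
        (by simpa using ha p hp hδ)
      simpa using hline.const_mul (δ p)
  · have hline := ((hasDerivAt_mul_const (x := (0 : ℝ)) (tailSum k r₀ t v j)).const_add
      (tailSum k r₀ t a j)).log (by simpa using hS j hj)
    simpa using hline.const_mul (1 - δ j)

theorem exists_fixedPoint_phiMap (hr₀ : 1 ≤ r₀) (hrk : r₀ ≤ k) (ht : ∀ q ∈ Icc r₀ k, 0 < t q)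
    (hδ₀ : ∀ i, 0 ≤ δ i) (hδ₁ : ∀ i, δ i ≤ 1) (hδr : ∀ i, 1 ≤ i → i < r₀ → δ i = 0) :
    ∃ a ∈ Dset k r₀, ∀ i ∈ Icc r₀ k, phiMap k r₀ t δ a i = a i := by
  have hkI : k ∈ Icc r₀ k := right_mem_Icc.2 hrk
  obtain ⟨u, hu, hupos⟩ := exists_pos_mem_simplexOn ⟨k, hkI⟩
  obtain ⟨A, hA, hmax⟩ := isCompact_simplexOn.exists_isMaxOn ⟨u, hu⟩
    (continuous_likelihood hδ₀ hδ₁).continuousOn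
  have hLA : 0 < likelihood k r₀ t δ A := (likelihood_pos hrk ht hupos).trans_le (hmax hu)
  have hAnn := hA.2.1
  obtain ⟨hAδ, hAk⟩ := pos_of_likelihood_ne_zero hr₀ hrk hAnn hLA.ne'
  have hS : ∀ j ∈ Icc 1 k, tailSum k r₀ t A j ≠ 0 := fun j hj =>
    (tailSum_pos hrk ht hAnn hAk (mem_Icc.1 hj).2).ne'
  have hmul : ∀ q ∈ Icc r₀ k, A q * score k r₀ t δ A q
      = δ q + A q / t q * censoredSum k r₀ t δ A q := fun q hq =>
    mul_score k r₀ t δ (or_iff_not_imp_right.2 fun hδ => (hAδ q hq hδ).ne')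
  have hkkt : ∀ i ∈ Icc r₀ k, ∀ l ∈ Icc r₀ k, 0 < A i → score k r₀ t δ A l ≤ score k r₀ t δ A i :=
    fun i hi l hl hAi => le_of_isMaxOn_simplexOn (continuous_likelihood hδ₀ hδ₁) hA hmax hLA
      (fun a ha hLa => (log_likelihood ht ha.2.1 hLa.ne').symm)
      (hasDerivAt_logLikelihood_line (fun p hp hδ => (hAδ p hp hδ).ne') hS) hi hl hAi
  have hscore : ∀ i ∈ Icc r₀ k, 0 < A i → score k r₀ t δ A i = k := fun i hi hAi => by
    rw [eq_sum_mul_of_forall_le hA hkkt hi hAi, sum_congr rfl hmul,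
      sum_phiMap_numerator k r₀ t δ hr₀ hδr hS]
  have hfix : ∀ i ∈ Icc r₀ k, phiMap k r₀ t δ A i = A i := fun i hi => by
    have hk : (k : ℝ) ≠ 0 := Nat.cast_ne_zero.2 (by omega)
    rw [phiMap_apply, ← hmul i hi]
    rcases (hAnn i hi).eq_or_lt with h | h
    · rw [← h, zero_mul, mul_zero]
    · rw [hscore i hi h]
      field_simp
  refine ⟨A, ⟨hAnn, hA.2.2, ?_⟩, hfix⟩
  rw [← hfix k hkI]
  exact (phiMap_mem_Dset hr₀ hrk ht hδ₀ hδ₁ hδr hAnn hAk).2.2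

end MultiplicativeCensoring

theorem phi_selfmap_and_fixed_point_general
    (k r₀ : ℕ) (hr₀ : 1 ≤ r₀) (hrk : r₀ ≤ k)
    (t : ℕ → ℝ) (ht_pos : ∀ i ∈ Finset.Icc 1 k, 0 < t i)
    (δ : ℕ → ℝ) (hδ : ∀ i, δ i = 0 ∨ δ i = 1)
    (hδr : ∀ i, 1 ≤ i → i < r₀ → δ i = 0) :
    ContinuousOn (phiMap k r₀ t δ) (Dset k r₀) ∧
    Set.MapsTo (phiMap k r₀ t δ) (Dset k r₀) (Dset k r₀) ∧
    ∃ a ∈ Dset k r₀, ∀ i ∈ Finset.Icc r₀ k, phiMap k r₀ t δ a i = a i := by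
  have ht : ∀ q ∈ Icc r₀ k, 0 < t q := fun q hq => ht_pos q (Icc_subset_Icc_left hr₀ hq)
  have hδ₀ : ∀ i, 0 ≤ δ i := fun i => by rcases hδ i with h | h <;> simp [h]
  have hδ₁ : ∀ i, δ i ≤ 1 := fun i => by rcases hδ i with h | h <;> simp [h]
  exact ⟨MultiplicativeCensoring.continuousOn_phiMap hr₀ hrk ht,
    MultiplicativeCensoring.mapsTo_phiMap hr₀ hrk ht hδ₀ hδ₁ hδr,
    MultiplicativeCensoring.exists_fixedPoint_phiMap hr₀ hrk ht hδ₀ hδ₁ hδr⟩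

/-- `φ` is a continuous self-map of `D`, and hence has a fixed point in `D`. -/
theorem phi_selfmap_and_fixed_point
    (k r₀ m : ℕ) (hr₀ : 1 ≤ r₀) (hrk : r₀ ≤ k)
    (t : ℕ → ℝ) (ht_pos : ∀ i ∈ Finset.Icc 1 k, 0 < t i)
    (ht_mono : StrictMonoOn t (Set.Icc 1 k))
    (δ : ℕ → ℝ) (hδ : ∀ i, δ i = 0 ∨ δ i = 1)
    (hδm : ∑ i ∈ Finset.Icc 1 k, δ i = (m : ℝ))
    (hδr : ∀ i, 1 ≤ i → i < r₀ → δ i = 0) :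
    ContinuousOn (phiMap k r₀ t δ) (Dset k r₀) ∧
    Set.MapsTo (phiMap k r₀ t δ) (Dset k r₀) (Dset k r₀) ∧
    ∃ a ∈ Dset k r₀, ∀ i ∈ Finset.Icc r₀ k, phiMap k r₀ t δ a i = a i :=
  phi_selfmap_and_fixed_point_general k r₀ hr₀ hrk t ht_pos δ hδ hδr
end
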